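/- Let G be a finite cyclic group of order n ≥ 2. Then P*(G) is Eulerian if and only if n is a power of 2. -/

import Mathlib

def powerGraph (G : Type*) [Group G] : SimpleGraph G where
  Adj x y := x ≠ y ∧ ((∃ m : ℕ, 0 < m ∧ y = x ^ m) ∨ (∃ m : ℕ, 0 < m ∧ x = y ^ m))
  symm := ⟨fun x y h => ⟨h.1.symm, h.2.symm⟩⟩
  loopless := ⟨fun x h => h.1 rfl⟩

def powerGraphStar (G : Type*) [Group G] : SimpleGraph {g : G // g ≠ 1} :=
  (powerGraph G).induce {g : G | g ≠ 1}

/-!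
The neighbours of `x ≠ 1` in `P*(G)` are the elements of `⟨x⟩` other than `1` and `x`, together
with the `y` such that `⟨x⟩ < ⟨y⟩`. Inversion permutes the latter without fixed points (an
involution `y` with `x ∈ ⟨y⟩` would be `x` itself), so `deg x ≡ ord x (mod 2)`. Hence every
degree is even iff every nonidentity element has even order, i.e. iff `G` is a `2`-group (Cauchy).
Connectedness is automatic for cyclic `G`: a generator is adjacent to every other vertex.
-/

open Subgroup

theorem Set.Finite.even_ncard_of_involution {α : Type*} {s : Set α} (hs : s.Finite)
    {f : α → α} (hmaps : Set.MapsTo f s s) (hinv : ∀ a ∈ s, f (f a) = a)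
    (hfree : ∀ a ∈ s, f a ≠ a) : Even s.ncard := by
  classical
  have := hs.fintype
  let g : Function.End s := hmaps.restrict
  have hg : g ^ 2 ^ 1 = 1 := funext fun a => Subtype.ext (hinv a a.2)
  have hfix : Function.fixedPoints g = ∅ :=
    Set.eq_empty_of_forall_notMem fun a ha => hfree a a.2 (congrArg Subtype.val ha)
  have hmod := Equiv.Perm.card_fixedPoints_modEq (p := 2) hg
  simp only [hfix] at hmod
  rw [Set.ncard_eq_toFinset_card', Set.toFinset_card, Nat.even_iff]
  exact hmod

section Group

variable {G : Type*} [Group G]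

theorem exists_pos_pow_eq_iff_mem_zpowers [Finite G] {x y : G} :
    (∃ m : ℕ, 0 < m ∧ y = x ^ m) ↔ y ∈ zpowers x := by
  refine ⟨fun ⟨m, _, hm⟩ => hm ▸ npow_mem_zpowers x m, fun hy => ?_⟩
  obtain ⟨m, rfl⟩ := mem_powers_iff_mem_zpowers.2 hy
  exact ⟨m + orderOf x, by have := orderOf_pos x; omega,
    by rw [pow_add, pow_orderOf_eq_one, mul_one]⟩

theorem zpowers_lt_zpowers_iff {x y : G} :
    zpowers x < zpowers y ↔ x ∈ zpowers y ∧ y ∉ zpowers x := by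
  rw [lt_iff_le_not_ge, zpowers_le, zpowers_le]

theorem eq_one_or_eq_of_mem_zpowers_of_inv_eq {x y : G} (hy : y⁻¹ = y)
    (hx : x ∈ zpowers y) : x = 1 ∨ x = y := by
  have hy2 : y ^ (2 : ℤ) = 1 := by rw [zpow_two]; nth_rewrite 1 [← hy]; exact inv_mul_cancel y
  obtain ⟨k, rfl⟩ := hx
  dsimp only
  rcases Int.even_or_odd' k with ⟨c, rfl | rfl⟩
  · left; rw [zpow_mul, hy2, one_zpow]
  · right; rw [zpow_add_one, zpow_mul, hy2, one_zpow, one_mul]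

theorem even_ncard_setOf_zpowers_lt [Finite G] {x : G} (hx : x ≠ 1) :
    Even {y : G | zpowers x < zpowers y}.ncard := by
  refine (Set.toFinite _).even_ncard_of_involution (f := (·⁻¹)) ?_ (fun y _ => inv_inv y) ?_
  · intro y hy
    simpa only [Set.mem_ofPred_eq, zpowers_inv] using hy
  · intro y hlt hy
    rcases eq_one_or_eq_of_mem_zpowers_of_inv_eq hy (zpowers_le.1 hlt.le) with rfl | rfl
    · exact hx rfl
    · exact lt_irrefl (zpowers x) hlt

theorem isPGroup_two_iff_forall_even_orderOf [Finite G] :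
    IsPGroup 2 G ↔ ∀ x : G, x ≠ 1 → Even (orderOf x) := by
  have := Fact.mk Nat.prime_two
  refine ⟨fun h x hx => even_iff_two_dvd.2 (h.dvd_orderOf hx), fun h => ?_⟩
  rw [isPGroup_iff_primeFactors_card_subset two_ne_zero, Nat.prime_two.primeFactors]
  intro q hq
  obtain ⟨hq, hqdvd, -⟩ := Nat.mem_primeFactors.1 hq
  obtain ⟨x, hx⟩ := exists_prime_orderOf_dvd_card' q (hp := ⟨hq⟩) hqdvd
  have hx1 : x ≠ 1 := by
    rintro rfl
    exact hq.ne_one (hx.symm.trans orderOf_one)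
  exact Finset.mem_singleton.2 (hq.even_iff.1 (hx ▸ h x hx1))

end Group

section PowerGraph

variable {G : Type*} [Group G] [Finite G]

theorem powerGraph_adj_iff {x y : G} :
    (powerGraph G).Adj x y ↔ x ≠ y ∧ (y ∈ zpowers x ∨ x ∈ zpowers y) := by
  simp only [powerGraph, exists_pos_pow_eq_iff_mem_zpowers]

theorem image_val_neighborSet_powerGraphStar {x : G} (hx : x ≠ 1) :
    Subtype.val '' (powerGraphStar G).neighborSet ⟨x, hx⟩ =
      ((zpowers x : Set G) \ {1, x}) ∪ {y | zpowers x < zpowers y} := by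
  ext y
  have h1 : (1 : G) ∈ zpowers x := one_mem _
  have hxx : x ∈ zpowers x := mem_zpowers x
  simp only [powerGraphStar, Set.mem_image, SimpleGraph.mem_neighborSet, SimpleGraph.induce_adj,
    Subtype.exists, exists_and_right, exists_eq_right, powerGraph_adj_iff, Set.mem_union,
    Set.mem_sdiff, SetLike.mem_coe, Set.mem_insert_iff, Set.mem_singleton_iff, Set.mem_ofPred_eq,
    zpowers_lt_zpowers_iff]
  grind

theorem ncard_neighborSet_powerGraphStar {x : G} (hx : x ≠ 1) :
    ((powerGraphStar G).neighborSet ⟨x, hx⟩).ncard =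
      (orderOf x - 2) + {y : G | zpowers x < zpowers y}.ncard := by
  have hdisj : Disjoint ((zpowers x : Set G) \ {1, x}) {y | zpowers x < zpowers y} :=
    Set.disjoint_left.2 fun y hy hlt => (zpowers_lt_zpowers_iff.1 hlt).2 hy.1
  have hsub : ({1, x} : Set G) ⊆ zpowers x :=
    Set.insert_subset (one_mem _) (Set.singleton_subset_iff.2 (mem_zpowers x))
  rw [← Set.ncard_image_of_injective _ Subtype.val_injective,
    image_val_neighborSet_powerGraphStar hx, Set.ncard_union_eq hdisj, Set.ncard_sdiff hsub,
    Set.ncard_pair hx.symm, ← Nat.card_zpowers, ← SetLike.coe_sort_coe, Nat.card_coe_set_eq]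

theorem even_ncard_neighborSet_powerGraphStar_iff {x : G} (hx : x ≠ 1) :
    Even ((powerGraphStar G).neighborSet ⟨x, hx⟩).ncard ↔ Even (orderOf x) := by
  have h2 : 2 ≤ orderOf x := by
    have := orderOf_pos x
    have : orderOf x ≠ 1 := mt orderOf_eq_one_iff.1 hx
    omega
  rw [ncard_neighborSet_powerGraphStar hx, Nat.even_add, Nat.even_sub h2]
  simp [even_ncard_setOf_zpowers_lt hx]

theorem powerGraphStar_connected [Nontrivial G] [IsCyclic G] : (powerGraphStar G).Connected := by
  obtain ⟨g, hg⟩ := IsCyclic.exists_generator (α := G)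
  have hg1 : g ≠ 1 := by
    rintro rfl
    obtain ⟨y, hy⟩ := exists_ne (1 : G)
    simp only [zpowers_one_eq_bot, mem_bot] at hg
    exact hy (hg y)
  refine SimpleGraph.Connected.of_isUniversal (v := ⟨g, hg1⟩) fun w hw => ?_
  exact powerGraph_adj_iff.2 ⟨fun h => hw (Subtype.ext h), Or.inl (hg w)⟩

end PowerGraph

theorem powerGraphStar_eulerian_iff (G : Type*) [Group G] [Fintype G] (hG : IsCyclic G)
    (n : ℕ) (hn : Fintype.card G = n) (h2 : 2 ≤ n) :
    ((powerGraphStar G).Connected ∧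
      ∀ v : {g : G // g ≠ 1}, Even (((powerGraphStar G).neighborSet v).ncard)) ↔
      ∃ k : ℕ, n = 2 ^ k := by
  have := Fact.mk Nat.prime_two
  have : Nontrivial G := Fintype.one_lt_card_iff_nontrivial.1 (hn ▸ h2)
  calc ((powerGraphStar G).Connected ∧
        ∀ v : {g : G // g ≠ 1}, Even (((powerGraphStar G).neighborSet v).ncard))
      ↔ ∀ x : G, x ≠ 1 → Even (orderOf x) := by
        rw [and_iff_right powerGraphStar_connected]
        exact ⟨fun h x hx => (even_ncard_neighborSet_powerGraphStar_iff hx).1 (h ⟨x, hx⟩),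
          fun h v => (even_ncard_neighborSet_powerGraphStar_iff v.2).2 (h v v.2)⟩
    _ ↔ IsPGroup 2 G := isPGroup_two_iff_forall_even_orderOf.symm
    _ ↔ ∃ k : ℕ, n = 2 ^ k := by rw [IsPGroup.iff_card, Nat.card_eq_fintype_card, hn]
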